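/- There exists a constant C₃' > 0, depending only on J, such that |∂v₀|² ≤ C₃' r⁻² at every point with ρ > 0; consequently |∂ ln X₀|² ≤ C₃ ρ⁻² with C₃ = C₃' + 4 at every point with ρ > 0. -/

import Mathlib

open Real MeasureTheory

noncomputable section

/-- Partial derivative with respect to ρ (the first coordinate) of an
axisymmetric function, viewed as a function of (ρ, z). -/
def pdR (f : ℝ × ℝ → ℝ) (p : ℝ × ℝ) : ℝ := fderiv ℝ f p (1, 0)

/-- Partial derivative with respect to z (the second coordinate). -/
def pdZ (f : ℝ × ℝ → ℝ) (p : ℝ × ℝ) : ℝ := fderiv ℝ f p (0, 1)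

/-- |∂f|² = f_{,ρ}² + f_{,z}². -/
def gradSq (f : ℝ × ℝ → ℝ) (p : ℝ × ℝ) : ℝ := (pdR f p) ^ 2 + (pdZ f p) ^ 2

/-- ∂f·∂g = f_{,ρ} g_{,ρ} + f_{,z} g_{,z}. -/
def gradDot (f g : ℝ × ℝ → ℝ) (p : ℝ × ℝ) : ℝ :=
  pdR f p * pdR g p + pdZ f p * pdZ g p

/-- The flat Laplacian of ℝ³ acting on axisymmetric functions:
Δf = f_{,ρρ} + ρ⁻¹ f_{,ρ} + f_{,zz}. -/
def lap (f : ℝ × ℝ → ℝ) (p : ℝ × ℝ) : ℝ :=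
  pdR (pdR f) p + (p.1)⁻¹ * pdR f p + pdZ (pdZ f) p

/-- The flat divergence of ℝ³ of an axisymmetric vector field (Wρ, Wz):
div W = ρ⁻¹ (ρ Wρ)_{,ρ} + Wz_{,z} = Wρ_{,ρ} + ρ⁻¹ Wρ + Wz_{,z}. -/
def divg (Wr Wz : ℝ × ℝ → ℝ) (p : ℝ × ℝ) : ℝ :=
  pdR Wr p + (p.1)⁻¹ * Wr p + pdZ Wz p

/-- The half-plane {ρ > 0} of (ρ, z), representing ℝ³ in cylindrical coordinates. -/
def HP : Set (ℝ × ℝ) := {p | 0 < p.1}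

/-- Ω_{ρ₀} = {ρ > ρ₀}, the exterior of the solid cylinder of radius ρ₀. -/
def Om (ρ₀ : ℝ) : Set (ℝ × ℝ) := {p | ρ₀ < p.1}

/-- ∫_{ℝ³} h dμ for an axisymmetric integrand h, where dμ = ρ dρ dz dφ. -/
def intR3 (h : ℝ × ℝ → ℝ) : ℝ := (2 * π) * ∫ p in HP, h p * p.1

/-- ∫_{Ω_{ρ₀}} h dμ for an axisymmetric integrand h. -/
def intOm (ρ₀ : ℝ) (h : ℝ × ℝ → ℝ) : ℝ := (2 * π) * ∫ p in Om ρ₀, h p * p.1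

/-- The mass functional M(v, Y) = (1/(32π)) ∫_{ℝ³} (|∂v|² + ρ⁻⁴ e^{−2v} |∂Y|²) dμ. -/
def MF (v Y : ℝ × ℝ → ℝ) : ℝ :=
  (1 / (32 * π)) *
    intR3 (fun p => gradSq v p + (p.1 ^ 4)⁻¹ * Real.exp (-2 * v p) * gradSq Y p)

/-- r = √(ρ² + z²). -/
def rr (p : ℝ × ℝ) : ℝ := Real.sqrt (p.1 ^ 2 + p.2 ^ 2)

/-- cos θ = z / r. -/
def cosT (p : ℝ × ℝ) : ℝ := p.2 / rr p

/-- sin²θ = ρ² / r². -/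
def sin2T (p : ℝ × ℝ) : ℝ := p.1 ^ 2 / (rr p) ^ 2

/-- r̃ = r + √|J|. -/
def rt (J : ℝ) (p : ℝ × ℝ) : ℝ := rr p + Real.sqrt |J|

/-- Σ = r̃² + |J| cos²θ. -/
def Sg (J : ℝ) (p : ℝ × ℝ) : ℝ := (rt J p) ^ 2 + |J| * (cosT p) ^ 2

/-- The extreme Kerr potential Y₀. -/
def Y0 (J : ℝ) (p : ℝ × ℝ) : ℝ :=
  2 * J * ((cosT p) ^ 3 - 3 * cosT p) - 2 * J ^ 2 * cosT p * (sin2T p) ^ 2 / Sg J p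

/-- The extreme Kerr Killing norm X₀. -/
def X0 (J : ℝ) (p : ℝ × ℝ) : ℝ :=
  (((rt J p) ^ 2 + |J|) ^ 2 - (rr p) ^ 2 * |J| * sin2T p) * sin2T p / Sg J p

/-- The extreme Kerr function v₀ = ln X₀ − 2 ln ρ, so that X₀ = ρ² e^{v₀}. -/
def v0 (J : ℝ) (p : ℝ × ℝ) : ℝ := Real.log (X0 J p) - 2 * Real.log p.1

/-- σ = √(r² + 1). -/
def sgm (p : ℝ × ℝ) : ℝ := Real.sqrt ((rr p) ^ 2 + 1)

/-- The pointwise weighted C¹ quantity σ^{−β}|f| + σ^{−β+1}|∂f|. -/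
def wFn (β : ℝ) (f : ℝ × ℝ → ℝ) (p : ℝ × ℝ) : ℝ :=
  sgm p ^ (-β) * |f p| + sgm p ^ (-β + 1) * Real.sqrt (gradSq f p)

/-- The weighted norm ‖f‖_{C¹_β(Ω)} = sup_Ω (σ^{−β}|f| + σ^{−β+1}|∂f|). -/
def C1norm (β : ℝ) (Ω : Set (ℝ × ℝ)) (f : ℝ × ℝ → ℝ) : ℝ :=
  sSup (wFn β f '' Ω)

/-- The Banach space 𝓑: pairs φ = (α, y) of axisymmetric C¹ functions with
y ≡ 0 on {ρ ≤ ρ₀} and finite norm ‖φ‖_𝓑 = ‖α‖_{C¹_β(ℝ³)} + ‖y‖_{C¹_β(Ω_{ρ₀})}. -/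
structure Bsp (ρ₀ β : ℝ) where
  a : ℝ × ℝ → ℝ
  y : ℝ × ℝ → ℝ
  ha : ContDiff ℝ 1 a
  hy : ContDiff ℝ 1 y
  hy0 : ∀ p : ℝ × ℝ, p.1 ≤ ρ₀ → y p = 0
  hba : BddAbove (wFn β a '' HP)
  hby : BddAbove (wFn β y '' Om ρ₀)

/-- The norm of 𝓑. -/
def Bnorm (ρ₀ β : ℝ) (φ : Bsp ρ₀ β) : ℝ :=
  C1norm β HP φ.a + C1norm β (Om ρ₀) φ.y

/-- i_φ(t) = M(u₀ + tφ) = M(v₀ + tα, Y₀ + ty). -/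
def iF (J ρ₀ β : ℝ) (φ : Bsp ρ₀ β) (t : ℝ) : ℝ :=
  MF (fun p => v0 J p + t * φ.a p) (fun p => Y0 J p + t * φ.y p)

/-- ‖α‖²_{H₁} = ∫_{ℝ³} |∂α|² dμ + ∫_{ℝ³} α² r⁻² dμ. -/
def H1sq (a : ℝ × ℝ → ℝ) : ℝ :=
  intR3 (fun p => gradSq a p) + intR3 (fun p => (a p) ^ 2 * ((rr p) ^ 2)⁻¹)

/-- ‖y‖²_{H₂} = ∫_{Ω_{ρ₀}} |∂y|² ρ⁻⁴ dμ + ∫_{Ω_{ρ₀}} y² ρ⁻⁶ dμ. -/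
def H2sq (ρ₀ : ℝ) (y : ℝ × ℝ → ℝ) : ℝ :=
  intOm ρ₀ (fun p => gradSq y p * (p.1 ^ 4)⁻¹) +
    intOm ρ₀ (fun p => (y p) ^ 2 * (p.1 ^ 6)⁻¹)

/-- ‖φ‖²_𝓗 = ‖α‖²_{H₁} + ‖y‖²_{H₂}. -/
def Hsq (ρ₀ β : ℝ) (φ : Bsp ρ₀ β) : ℝ := H1sq φ.a + H2sq ρ₀ φ.y

/-! With `s = √|J|`, `Q = (r + s)² + s²`, `A = Q² - s²ρ²` and `B = r²Q - s²ρ²`, one has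
`r²Σ = B` and `X₀ = ρ² A / B`, so `v₀ = ln A - ln B`. Both logarithms are functions of
`(r, ρ)` only, and `|∂r| = |∂ρ| = 1`, so it suffices that their partial derivatives in `r`
and in `ρ` are `O(1/r)`. This follows from `A ≥ ¾ Q²` and `B ≥ r²(r + s)²`: the
`r`-derivatives `4Q(r + s)` and `2rQ + 2r²(r + s)` lose a factor `r + s` against them, and
`∂_ρ A = ∂_ρ B = -2s²ρ` is even smaller. Finally `ln X₀ = v₀ + 2 ln ρ` adds `2/ρ` to the
`ρ`-derivative. -/

def kerrQ (s r : ℝ) : ℝ := (r + s) ^ 2 + s ^ 2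

def kerrA (s r ρ : ℝ) : ℝ := kerrQ s r ^ 2 - s ^ 2 * ρ ^ 2

def kerrB (s r ρ : ℝ) : ℝ := r ^ 2 * kerrQ s r - s ^ 2 * ρ ^ 2

section KerrPolynomials

variable {s r ρ : ℝ}

lemma sq_add_le_kerrQ : (r + s) ^ 2 ≤ kerrQ s r := by
  unfold kerrQ; nlinarith [sq_nonneg s]

lemma kerrQ_le (hs : 0 ≤ s) (hr : 0 ≤ r) : kerrQ s r ≤ 2 * (r + s) ^ 2 := by
  unfold kerrQ; nlinarith [mul_nonneg hr hs]

lemma kerrQ_pos (hr : 0 < r) (hs : 0 ≤ s) : 0 < kerrQ s r :=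
  (by positivity : 0 < (r + s) ^ 2).trans_le sq_add_le_kerrQ

lemma three_fourths_kerrQ_sq_le_kerrA (hs : 0 ≤ s) (hρ : 0 < ρ) (hρr : ρ ≤ r) :
    3 / 4 * kerrQ s r ^ 2 ≤ kerrA s r ρ := by
  have hsρ : 2 * (s * ρ) ≤ kerrQ s r := by
    unfold kerrQ; nlinarith [sq_nonneg r, mul_le_mul_of_nonneg_left hρr hs]
  unfold kerrA; nlinarith [mul_nonneg hs hρ.le]

lemma sq_mul_sq_add_le_kerrB (hρ : 0 < ρ) (hρr : ρ ≤ r) :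
    r ^ 2 * (r + s) ^ 2 ≤ kerrB s r ρ := by
  unfold kerrB kerrQ; nlinarith [mul_le_mul hρr hρr hρ.le (hρ.le.trans hρr), sq_nonneg s]

lemma kerrA_pos (hs : 0 ≤ s) (hρ : 0 < ρ) (hρr : ρ ≤ r) : 0 < kerrA s r ρ := by
  have := kerrQ_pos (hρ.trans_le hρr) hs
  exact (by positivity : (0 : ℝ) < 3 / 4 * kerrQ s r ^ 2).trans_le
    (three_fourths_kerrQ_sq_le_kerrA hs hρ hρr)

lemma kerrB_pos (hs : 0 ≤ s) (hρ : 0 < ρ) (hρr : ρ ≤ r) : 0 < kerrB s r ρ :=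
  (by have := hρ.trans_le hρr; positivity : (0 : ℝ) < r ^ 2 * (r + s) ^ 2).trans_le
    (sq_mul_sq_add_le_kerrB hρ hρr)

end KerrPolynomials

section KerrLogDerivBounds

variable {s r ρ : ℝ}

lemma kerrA_logDeriv_r_le (hs : 0 ≤ s) (hρ : 0 < ρ) (hρr : ρ ≤ r) :
    4 * kerrQ s r * (r + s) / kerrA s r ρ ≤ 6 / r := by
  have hr := hρ.trans_le hρr
  have hQ := kerrQ_pos hr hs
  have hQr : (r + s) * r ≤ kerrQ s r := by nlinarith [sq_add_le_kerrQ (s := s) (r := r)]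
  rw [div_le_div_iff₀ (kerrA_pos hs hρ hρr) hr]
  nlinarith [three_fourths_kerrQ_sq_le_kerrA hs hρ hρr, mul_le_mul_of_nonneg_left hQr hQ.le]

lemma kerrB_logDeriv_r_le (hs : 0 ≤ s) (hρ : 0 < ρ) (hρr : ρ ≤ r) :
    (2 * r * kerrQ s r + 2 * r ^ 2 * (r + s)) / kerrB s r ρ ≤ 6 / r := by
  have hr := hρ.trans_le hρr
  rw [div_le_div_iff₀ (kerrB_pos hs hρ hρr) hr]
  nlinarith [sq_mul_sq_add_le_kerrB (s := s) hρ hρr,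
    mul_le_mul_of_nonneg_left (kerrQ_le hs hr.le) (by positivity : (0 : ℝ) ≤ 2 * r ^ 2),
    mul_nonneg (pow_nonneg hr.le 3) hs]

lemma kerrA_logDeriv_ρ_le (hs : 0 ≤ s) (hρ : 0 < ρ) (hρr : ρ ≤ r) :
    2 * s ^ 2 * ρ / kerrA s r ρ ≤ 2 / r := by
  have hr := hρ.trans_le hρr
  have hQ : 2 * (r * s) ≤ kerrQ s r := by
    nlinarith [sq_add_le_kerrQ (s := s) (r := r), sq_nonneg (r - s)]
  rw [div_le_div_iff₀ (kerrA_pos hs hρ hρr) hr]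
  nlinarith [three_fourths_kerrQ_sq_le_kerrA hs hρ hρr,
    mul_le_mul hQ hQ (by positivity) (kerrQ_pos hr hs).le,
    mul_le_mul_of_nonneg_left hρr (by positivity : (0 : ℝ) ≤ s ^ 2 * r)]

lemma kerrB_logDeriv_ρ_le (hs : 0 ≤ s) (hρ : 0 < ρ) (hρr : ρ ≤ r) :
    2 * s ^ 2 * ρ / kerrB s r ρ ≤ 2 / r := by
  have hr := hρ.trans_le hρr
  rw [div_le_div_iff₀ (kerrB_pos hs hρ hρr) hr]
  nlinarith [sq_mul_sq_add_le_kerrB (s := s) hρ hρr, mul_nonneg hr.le hs,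
    mul_le_mul_of_nonneg_left hρr (by positivity : (0 : ℝ) ≤ s ^ 2 * r)]

lemma abs_kerr_logDeriv_r_sub_le (hs : 0 ≤ s) (hρ : 0 < ρ) (hρr : ρ ≤ r) :
    |4 * kerrQ s r * (r + s) / kerrA s r ρ -
      (2 * r * kerrQ s r + 2 * r ^ 2 * (r + s)) / kerrB s r ρ| ≤ 6 / r := by
  have hr := hρ.trans_le hρr
  have := kerrQ_pos hr hs
  have := kerrA_pos hs hρ hρr
  have := kerrB_pos hs hρ hρr
  exact abs_sub_le_of_nonneg_of_le (by positivity) (kerrA_logDeriv_r_le hs hρ hρr)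
    (by positivity) (kerrB_logDeriv_r_le hs hρ hρr)

lemma abs_kerr_logDeriv_ρ_sub_le (hs : 0 ≤ s) (hρ : 0 < ρ) (hρr : ρ ≤ r) :
    |2 * s ^ 2 * ρ / kerrB s r ρ - 2 * s ^ 2 * ρ / kerrA s r ρ| ≤ 2 / r := by
  have := kerrA_pos hs hρ hρr
  have := kerrB_pos hs hρ hρr
  exact abs_sub_le_of_nonneg_of_le (by positivity) (kerrB_logDeriv_ρ_le hs hρ hρr)
    (by positivity) (kerrA_logDeriv_ρ_le hs hρ hρr)

end KerrLogDerivBounds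

section CylindricalCalculus

variable {p : ℝ × ℝ}

lemma rr_sq (p : ℝ × ℝ) : rr p ^ 2 = p.1 ^ 2 + p.2 ^ 2 := Real.sq_sqrt (by positivity)

lemma rr_pos (hp : 0 < p.1) : 0 < rr p := Real.sqrt_pos.2 (by positivity)

lemma fst_le_rr (p : ℝ × ℝ) : p.1 ≤ rr p :=
  Real.le_sqrt_of_sq_le (by nlinarith [sq_nonneg p.2])

/-- The differential at `p` of `q ↦ F (rr q) q.1` when `∂F/∂r = a` and `∂F/∂ρ = b`. -/
def rρDiff (p : ℝ × ℝ) (a b : ℝ) : ℝ × ℝ →L[ℝ] ℝ :=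
  a • ((p.1 / rr p) • ContinuousLinearMap.fst ℝ ℝ ℝ +
      (p.2 / rr p) • ContinuousLinearMap.snd ℝ ℝ ℝ) + b • ContinuousLinearMap.fst ℝ ℝ ℝ

@[simp]
lemma rρDiff_apply (a b : ℝ) (v : ℝ × ℝ) :
    rρDiff p a b v = a * (p.1 / rr p * v.1 + p.2 / rr p * v.2) + b * v.1 := by
  simp only [rρDiff, add_apply, smul_apply, ContinuousLinearMap.coe_fst',
    ContinuousLinearMap.coe_snd', smul_eq_mul]

lemma hasFDerivAt_rr (hp : 0 < p.1) : HasFDerivAt rr (rρDiff p 1 0) p := by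
  have hsq : HasFDerivAt (fun q : ℝ × ℝ => q.1 ^ 2 + q.2 ^ 2)
      ((2 * p.1) • ContinuousLinearMap.fst ℝ ℝ ℝ + (2 * p.2) • ContinuousLinearMap.snd ℝ ℝ ℝ)
      p := by
    refine ((hasFDerivAt_fst.pow 2).add (hasFDerivAt_snd.pow 2)).congr_fderiv
      (ContinuousLinearMap.ext fun v => ?_)
    simp only [add_apply, smul_apply, smul_eq_mul, nsmul_eq_mul, ContinuousLinearMap.coe_fst',
      ContinuousLinearMap.coe_snd']
    ring
  refine (hsq.sqrt (by positivity)).congr_fderiv (ContinuousLinearMap.ext fun v => ?_)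
  have hr := (rr_pos hp).ne'
  simp only [add_apply, smul_apply, smul_eq_mul, rρDiff_apply, ContinuousLinearMap.coe_fst',
    ContinuousLinearMap.coe_snd', one_mul, zero_mul, add_zero]
  simp only [rr] at hr ⊢
  field_simp

lemma hasFDerivAt_fst_rρDiff : HasFDerivAt (fun q : ℝ × ℝ => q.1) (rρDiff p 0 1) p :=
  hasFDerivAt_fst.congr_fderiv (by ext <;> simp)

lemma gradSq_le_of_hasFDerivAt {f : ℝ × ℝ → ℝ} {a b : ℝ} (hp : 0 < p.1)
    (hf : HasFDerivAt f (rρDiff p a b) p) : gradSq f p ≤ (|a| + |b|) ^ 2 := by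
  have hr := rr_pos hp
  set u := p.1 / rr p
  have hu : u ^ 2 + (p.2 / rr p) ^ 2 = 1 := by
    rw [div_pow, div_pow, ← add_div, ← rr_sq, div_self (by positivity)]
  have hu0 : 0 ≤ u := by positivity
  have hu1 : u ≤ 1 := (div_le_one hr).2 (fst_le_rr p)
  have hab : a * b * u ≤ |a| * |b| := by
    rw [← abs_mul]
    nlinarith [le_abs_self (a * b), neg_abs_le (a * b), abs_nonneg (a * b)]
  have hgrad : gradSq f p = a ^ 2 + 2 * (a * b * u) + b ^ 2 := by
    simp only [gradSq, pdR, pdZ, hf.fderiv, rρDiff_apply]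
    linear_combination a ^ 2 * hu
  rw [hgrad, add_sq, sq_abs, sq_abs]
  linarith

end CylindricalCalculus

section ExtremeKerr

variable {p : ℝ × ℝ}

lemma hasFDerivAt_kerrA (s : ℝ) (hp : 0 < p.1) :
    HasFDerivAt (fun q => kerrA s (rr q) q.1)
      (rρDiff p (4 * kerrQ s (rr p) * (rr p + s)) (-(2 * s ^ 2 * p.1))) p := by
  have hQ := ((hasFDerivAt_rr hp).add_const s).pow 2 |>.add_const (s ^ 2)
  refine ((hQ.pow 2).sub ((hasFDerivAt_fst_rρDiff.pow 2).const_mul (s ^ 2))).congr_fderiv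
    (ContinuousLinearMap.ext fun v => ?_)
  simp only [sub_apply, smul_apply, smul_eq_mul, nsmul_eq_mul, rρDiff_apply, kerrQ]
  ring

lemma hasFDerivAt_kerrB (s : ℝ) (hp : 0 < p.1) :
    HasFDerivAt (fun q => kerrB s (rr q) q.1)
      (rρDiff p (2 * rr p * kerrQ s (rr p) + 2 * rr p ^ 2 * (rr p + s)) (-(2 * s ^ 2 * p.1)))
      p := by
  have hQ := ((hasFDerivAt_rr hp).add_const s).pow 2 |>.add_const (s ^ 2)
  refine ((((hasFDerivAt_rr hp).pow 2).mul hQ).sub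
    ((hasFDerivAt_fst_rρDiff.pow 2).const_mul (s ^ 2))).congr_fderiv
    (ContinuousLinearMap.ext fun v => ?_)
  simp only [add_apply, sub_apply, smul_apply, smul_eq_mul, nsmul_eq_mul, rρDiff_apply, kerrQ]
  ring

lemma X0_eq (J : ℝ) (hp : 0 < p.1) :
    X0 J p = p.1 ^ 2 * kerrA √|J| (rr p) p.1 / kerrB √|J| (rr p) p.1 := by
  have hr := rr_pos hp
  have hB := kerrB_pos (Real.sqrt_nonneg |J|) hp (fst_le_rr p)
  rw [X0, Sg, rt, cosT, sin2T]
  set s := √|J|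
  have hJ : |J| = s ^ 2 := (Real.sq_sqrt (abs_nonneg J)).symm
  have hSg : (rr p + s) ^ 2 + s ^ 2 * (p.2 / rr p) ^ 2 = kerrB s (rr p) p.1 / rr p ^ 2 := by
    rw [eq_div_iff (by positivity)]
    unfold kerrB kerrQ
    field_simp
    linear_combination -s ^ 2 * rr_sq p
  rw [hJ, hSg]
  unfold kerrA kerrQ
  field_simp

lemma v0_eq (J : ℝ) (hp : 0 < p.1) :
    v0 J p = Real.log (kerrA √|J| (rr p) p.1) - Real.log (kerrB √|J| (rr p) p.1) := by
  have hA := kerrA_pos (Real.sqrt_nonneg |J|) hp (fst_le_rr p)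
  have hB := kerrB_pos (Real.sqrt_nonneg |J|) hp (fst_le_rr p)
  rw [v0, X0_eq J hp, Real.log_div (by positivity) hB.ne', Real.log_mul (by positivity) hA.ne',
    Real.log_pow]
  push_cast
  ring

lemma exists_hasFDerivAt_v0 (J : ℝ) (hp : 0 < p.1) :
    ∃ a b, HasFDerivAt (v0 J) (rρDiff p a b) p ∧ |a| + |b| ≤ 8 / rr p := by
  set s := √|J|
  have hs : 0 ≤ s := Real.sqrt_nonneg |J|
  have hA := kerrA_pos hs hp (fst_le_rr p)
  have hB := kerrB_pos hs hp (fst_le_rr p)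
  have hv0 : v0 J =ᶠ[nhds p]
      fun q => Real.log (kerrA s (rr q) q.1) - Real.log (kerrB s (rr q) q.1) :=
    Filter.eventuallyEq_of_mem ((isOpen_lt continuous_const continuous_fst).mem_nhds hp)
      fun q hq => v0_eq J hq
  refine ⟨_, _, (((hasFDerivAt_kerrA s hp).log hA.ne').sub
    ((hasFDerivAt_kerrB s hp).log hB.ne')).congr_of_eventuallyEq hv0 |>.congr_fderiv
      (ContinuousLinearMap.ext fun v => ?_),
    (add_le_add (abs_kerr_logDeriv_r_sub_le hs hp (fst_le_rr p))
      (abs_kerr_logDeriv_ρ_sub_le hs hp (fst_le_rr p))).trans_eq (by ring)⟩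
  simp only [sub_apply, smul_apply, smul_eq_mul, rρDiff_apply]
  field_simp
  ring

lemma hasFDerivAt_log_X0 {J a b : ℝ} (hp : 0 < p.1)
    (hv : HasFDerivAt (v0 J) (rρDiff p a b) p) :
    HasFDerivAt (fun q => Real.log (X0 J q)) (rρDiff p a (b + 2 / p.1)) p := by
  have hlog : (fun q => Real.log (X0 J q)) = fun q => v0 J q + 2 * Real.log q.1 := by
    funext q; rw [v0]; ring
  rw [hlog]
  refine (hv.add ((hasFDerivAt_fst_rρDiff.log hp.ne').const_mul 2)).congr_fderiv
    (ContinuousLinearMap.ext fun v => ?_)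
  simp only [add_apply, smul_apply, smul_eq_mul, rρDiff_apply]
  ring

end ExtremeKerr

theorem extremeKerr_v0_gradient_bound_general (J : ℝ) :
    ∃ C₃' > (0 : ℝ),
      (∀ p : ℝ × ℝ, 0 < p.1 → gradSq (v0 J) p ≤ C₃' * ((rr p) ^ 2)⁻¹) ∧
      ∀ p : ℝ × ℝ, 0 < p.1 →
        gradSq (fun q => Real.log (X0 J q)) p ≤ (C₃' + 4) * (p.1 ^ 2)⁻¹ := by
  refine ⟨96, by norm_num, fun p hp => ?_, fun p hp => ?_⟩ <;>
    obtain ⟨a, b, hv, hab⟩ := exists_hasFDerivAt_v0 J hp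
  · calc gradSq (v0 J) p ≤ (|a| + |b|) ^ 2 := gradSq_le_of_hasFDerivAt hp hv
      _ ≤ (8 / rr p) ^ 2 := by gcongr
      _ ≤ 96 * (rr p ^ 2)⁻¹ := by rw [div_pow, div_eq_mul_inv]; gcongr; norm_num
  · have h8 : 8 / rr p ≤ 8 / p.1 := div_le_div_of_nonneg_left (by norm_num) hp (fst_le_rr p)
    have h2ρ : |b + 2 / p.1| ≤ |b| + 2 / p.1 := by
      simpa [abs_of_pos (by positivity : 0 < 2 / p.1)] using abs_add_le b (2 / p.1)
    calc gradSq (fun q => Real.log (X0 J q)) p ≤ (|a| + |b + 2 / p.1|) ^ 2 :=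
          gradSq_le_of_hasFDerivAt hp (hasFDerivAt_log_X0 hp hv)
      _ ≤ (8 / p.1 + 2 / p.1) ^ 2 := by gcongr ?_ ^ 2; linarith
      _ = (96 + 4) * (p.1 ^ 2)⁻¹ := by field_simp; norm_num

/-- There exists C₃' > 0, depending only on J, such that
|∂v₀|² ≤ C₃' r⁻² at every point with ρ > 0; consequently |∂ ln X₀|² ≤ C₃ ρ⁻² with
C₃ = C₃' + 4 at every point with ρ > 0. -/
theorem extremeKerr_v0_gradient_bound (J : ℝ) (hJ : J ≠ 0) :
    ∃ C₃' > (0 : ℝ),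
      (∀ p : ℝ × ℝ, 0 < p.1 → gradSq (v0 J) p ≤ C₃' * ((rr p) ^ 2)⁻¹) ∧
      ∀ p : ℝ × ℝ, 0 < p.1 →
        gradSq (fun q => Real.log (X0 J q)) p ≤ (C₃' + 4) * (p.1 ^ 2)⁻¹ :=
  extremeKerr_v0_gradient_bound_general J
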